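/- arXiv:1806.05811 — 4 statements merged into one kernel-verified Lean document; each statement's English description precedes it below -/
import Mathlib

section
/- Let (T,X) be a semiflow whose phase semigroup T is an almost right C-semigroup or is abelian. If (T,X) is l.a.p. at some point x₀ ∈ X, then every point of cls(Tx₀) is an l.a.p. point of (T,X). -/
open Filter Topology Set Uniformity

universe u v w

section Core

variable {T : Type u} {X : Type v}

/-- `A ⊆ T` is (right) syndetic in `T`: there is a compact `K ⊆ T` with `Kt ∩ A ≠ ∅`
for every `t ∈ T`. -/
def Syndetic [Mul T] [TopologicalSpace T] (A : Set T) : Prop :=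
  ∃ K : Set T, IsCompact K ∧ ∀ t : T, ∃ k ∈ K, k * t ∈ A

/-- `A ⊆ T` is discretely syndetic: there is a finite `K ⊆ T` with `Kt ∩ A ≠ ∅`
for every `t ∈ T`. -/
def DiscSyndetic [Mul T] (A : Set T) : Prop :=
  ∃ K : Set T, K.Finite ∧ ∀ t : T, ∃ k ∈ K, k * t ∈ A

/-- `x` is an almost automorphic (a.a.) point for the action `act : T → X → X`:
for every net `{t_n}` in `T`, every `y, x' ∈ X` and every net `{x'_n}` in `X` with
`t_n x → y`, `x'_n → x'` and `t_n x'_n = y` for all `n`, one has `x = x'`. -/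
def IsAAPointVia [TopologicalSpace X] (act : T → X → X) (x : X) : Prop :=
  ∀ (ι : Type w) [Preorder ι] [IsDirected ι (· ≤ ·)] [Nonempty ι]
    (t : ι → T) (xn : ι → X) (y x' : X),
    Tendsto (fun n => act (t n) x) atTop (𝓝 y) →
    Tendsto xn atTop (𝓝 x') →
    (∀ n, act (t n) (xn n) = y) → x = x'

/-- `x` is proximal to `y`: there is a net `{t_n}` in `T` with `lim t_n x = lim t_n y`. -/
def ProximalVia [TopologicalSpace X] (act : T → X → X) (x y : X) : Prop :=
  ∃ (ι : Type w) (pι : Preorder ι),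
    letI := pι
    IsDirected ι (· ≤ ·) ∧ Nonempty ι ∧
      ∃ (t : ι → T) (z : X),
        Tendsto (fun n => act (t n) x) atTop (𝓝 z) ∧
        Tendsto (fun n => act (t n) y) atTop (𝓝 z)

/-- The orbit `Tx`. -/
def orbitVia (act : T → X → X) (x : X) : Set X := Set.range fun t => act t x

/-- `x` is a distal point: the only point of `cls(Tx)` proximal to `x` is `x` itself. -/
def DistalPtVia [TopologicalSpace X] (act : T → X → X) (x : X) : Prop :=
  ∀ y ∈ closure (orbitVia act x), ProximalVia.{u,v,w} act x y → y = x

/-- `x` is a locally almost periodic (l.a.p.) point. -/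
def LapPtVia [Mul T] [TopologicalSpace T] [TopologicalSpace X] (act : T → X → X) (x : X) : Prop :=
  ∀ U ∈ 𝓝 x, ∃ V ∈ 𝓝 x, ∃ A : Set T, Syndetic A ∧ ∀ a ∈ A, ∀ v ∈ V, act a v ∈ U

/-- `x` is regionally proximal to `x'`. -/
def RegProximalVia [TopologicalSpace X] (act : T → X → X) (x x' : X) : Prop :=
  ∃ (ι : Type w) (pι : Preorder ι),
    letI := pι
    IsDirected ι (· ≤ ·) ∧ Nonempty ι ∧
      ∃ (t : ι → T) (xn x'n : ι → X) (z : X),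
        Tendsto xn atTop (𝓝 x) ∧ Tendsto x'n atTop (𝓝 x') ∧
        Tendsto (fun n => act (t n) (xn n)) atTop (𝓝 z) ∧
        Tendsto (fun n => act (t n) (x'n n)) atTop (𝓝 z)

/-- `(x,y) ∈ Q⁻`. -/
def QMinusVia [TopologicalSpace X] (act : T → X → X) (x y : X) : Prop :=
  ∃ (ι : Type w) (pι : Preorder ι),
    letI := pι
    IsDirected ι (· ≤ ·) ∧ Nonempty ι ∧
      ∃ (t : ι → T) (xn yn : ι → X) (z : X),
        Tendsto xn atTop (𝓝 z) ∧ Tendsto yn atTop (𝓝 z) ∧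
        Tendsto (fun n => act (t n) (xn n)) atTop (𝓝 x) ∧
        Tendsto (fun n => act (t n) (yn n)) atTop (𝓝 y)

/-- The semiflow is equicontinuous. -/
def EquicontSF [UniformSpace X] (act : T → X → X) : Prop :=
  ∀ ε ∈ 𝓤 X, ∃ δ ∈ 𝓤 X, ∀ p : X × X, p ∈ δ → ∀ t : T, (act t p.1, act t p.2) ∈ ε

/-- The semiflow is almost periodic: for each entourage `ε` there is a syndetic `A ⊆ T`
with `Ax ⊆ ε[x]` for all `x`. -/
def APSF [Mul T] [TopologicalSpace T] [UniformSpace X] (act : T → X → X) : Prop :=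
  ∀ ε ∈ 𝓤 X, ∃ A : Set T, Syndetic A ∧ ∀ a ∈ A, ∀ x : X, (x, act a x) ∈ ε

/-- The semiflow is minimal: every orbit is dense. -/
def MinimalSF [TopologicalSpace X] (act : T → X → X) : Prop :=
  ∀ x : X, Dense (orbitVia act x)

/-- `T` is an almost right C-semigroup. -/
def AlmostRightC (T : Type*) [Mul T] [TopologicalSpace T] : Prop :=
  Dense {t : T | IsCompact (closure ((Set.range fun s : T => s * t)ᶜ))}

end Core

section Helpers

variable {T : Type u} {X : Type v} [Monoid T] [TopologicalSpace T] [ContinuousMul T]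
  [TopologicalSpace X] [CompactSpace X] [T2Space X]
  [MulAction T X] [ContinuousSMul T X]

/-- For compact `S ⊆ T` and open `V ⊆ X`, the set `{z | S z ⊆ V}` is open. -/
lemma isOpen_forall_smul_mem {S : Set T} (hS : IsCompact S) {V : Set X} (hV : IsOpen V) :
    IsOpen {z : X | ∀ s ∈ S, s • z ∈ V} := by
  rw [isOpen_iff_forall_mem_open]
  intro z hz
  have hn : IsOpen ((fun p : T × X => p.1 • p.2) ⁻¹' V) := hV.preimage continuous_smul
  have hsub : S ×ˢ ({z} : Set X) ⊆ (fun p : T × X => p.1 • p.2) ⁻¹' V := by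
    rintro ⟨s, x⟩ ⟨hs, hx⟩
    rcases hx with rfl
    exact hz s hs
  obtain ⟨u, v, _, hvo, hSu, hzv, huv⟩ :=
    generalized_tube_lemma hS isCompact_singleton hn hsub
  exact ⟨v, fun z' hz' s hs => huv (Set.mk_mem_prod (hSu hs) hz'), hvo, hzv rfl⟩

/-- If `x₀` is an almost periodic point, then for every `z` in the orbit closure of `x₀`,
the orbit of `z` comes back to every neighborhood of `x₀`. -/
lemma exists_smul_mem_of_ap (x₀ : X)
    (hap : ∀ U ∈ 𝓝 x₀, ∃ A : Set T, Syndetic A ∧ ∀ a ∈ A, a • x₀ ∈ U)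
    {z : X} (hz : z ∈ closure (orbitVia (fun (t : T) (x : X) => t • x) x₀))
    {V : Set X} (hV : V ∈ 𝓝 x₀) : ∃ w : T, w • z ∈ V := by
  obtain ⟨V₁, hV₁nhds, hV₁closed, hV₁sub⟩ := exists_mem_nhds_isClosed_subset hV
  obtain ⟨A, ⟨K, hKcpt, hKsynd⟩, hA⟩ := hap V₁ hV₁nhds
  by_contra h
  push_neg at h
  -- `Ω` is an open neighborhood of `z` disjoint from returns
  have hΩopen : IsOpen {x : X | ∀ k ∈ K, k • x ∈ V₁ᶜ} :=
    isOpen_forall_smul_mem hKcpt hV₁closed.isOpen_compl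
  have hzΩ : z ∈ {x : X | ∀ k ∈ K, k • x ∈ V₁ᶜ} := by
    intro k _
    exact fun hk => h k (hV₁sub hk)
  -- the orbit of `x₀` meets `Ω`
  have := hz
  rw [mem_closure_iff] at this
  obtain ⟨w, hwΩ, hworb⟩ := this _ hΩopen hzΩ
  obtain ⟨t, rfl⟩ := hworb
  obtain ⟨k, hkK, hktA⟩ := hKsynd t
  have h1 : (k * t) • x₀ ∈ V₁ := hA _ hktA
  have h2 : (k * t) • x₀ ∈ V₁ᶜ := by
    rw [mul_smul]
    exact hwΩ k hkK
  exact h2 h1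

end Helpers


/-- Let `(T,X)` be a semiflow with `T` an almost right C-semigroup or abelian. If `(T,X)`
is l.a.p. at some point `x₀`, then every point of `cls(Tx₀)` is an l.a.p. point. -/
theorem lap_point_closure_orbit
    {T : Type u} {X : Type v} [Monoid T] [TopologicalSpace T] [ContinuousMul T]
    [TopologicalSpace X] [CompactSpace X] [T2Space X] [Nonempty X]
    [MulAction T X] [ContinuousSMul T X]
    (hT : AlmostRightC T ∨ ∀ a b : T, a * b = b * a)
    (x₀ : X) (hx₀ : LapPtVia (fun (t : T) (z : X) => t • z) x₀) :
    ∀ y ∈ closure (orbitVia (fun (t : T) (z : X) => t • z) x₀),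
      LapPtVia (fun (t : T) (z : X) => t • z) y := by
  intro y hyM
  intro U hU
  -- `x₀` is an almost periodic point
  have hap : ∀ U' ∈ 𝓝 x₀, ∃ A : Set T, Syndetic A ∧ ∀ a ∈ A, a • x₀ ∈ U' := by
    intro U' hU'
    obtain ⟨V, hV, A, hAsynd, hAV⟩ := hx₀ U' hU'
    exact ⟨A, hAsynd, fun a ha => hAV a ha x₀ (mem_of_mem_nhds hV)⟩
  obtain ⟨U', hU'o, hU'sub, hyU'⟩ : ∃ U', IsOpen U' ∧ U' ⊆ U ∧ y ∈ U' :=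
    ⟨interior U, isOpen_interior, interior_subset, mem_interior_iff_mem_nhds.2 hU⟩
  -- choose `t₀` with `t₀ • x₀ ∈ U'`
  obtain ⟨t₀, ht₀⟩ : ∃ t₀ : T, t₀ • x₀ ∈ U' := by
    rw [mem_closure_iff] at hyM
    obtain ⟨w, hw, t₀, rfl⟩ := hyM U' hU'o hyU'
    exact ⟨t₀, hw⟩
  have hyM' : y ∈ closure (orbitVia (fun (t : T) (z : X) => t • z) x₀) := by
    rw [mem_closure_iff]; rwa [mem_closure_iff] at hyM
  set U₀ : Set X := {z | t₀ • z ∈ U'} with hU₀def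
  have hU₀open : IsOpen U₀ := hU'o.preimage (continuous_const_smul t₀)
  have hU₀nhds : U₀ ∈ 𝓝 x₀ := hU₀open.mem_nhds ht₀
  -- local almost periodicity at `x₀`
  obtain ⟨V₀pre, hV₀pre, A₀, hA₀synd, hA₀⟩ := hx₀ U₀ hU₀nhds
  set V₀ := interior V₀pre with hV₀def
  have hV₀open : IsOpen V₀ := isOpen_interior
  have hV₀nhds : V₀ ∈ 𝓝 x₀ := interior_mem_nhds.2 hV₀pre
  have hA₀V₀ : ∀ a ∈ A₀, ∀ v ∈ V₀, a • v ∈ U₀ := fun a ha v hv => hA₀ a ha v (interior_subset hv)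
  obtain ⟨K₀, hK₀cpt, hK₀⟩ := hA₀synd
  obtain ⟨a₀, ha₀⟩ : ∃ a₀, a₀ ∈ A₀ := by
    obtain ⟨k, _, hk⟩ := hK₀ 1; exact ⟨k * 1, hk⟩
  -- a smaller closed neighborhood inside `V₀`
  obtain ⟨Vc, hVcnhds, hVcclosed, hVcsub⟩ := exists_mem_nhds_isClosed_subset hV₀nhds
  set V₀' := interior Vc with hV₀'def
  have hV₀'open : IsOpen V₀' := isOpen_interior
  have hx₀V₀' : x₀ ∈ V₀' := mem_interior_iff_mem_nhds.2 hVcnhds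
  have hclV₀' : closure V₀' ⊆ V₀ := (closure_minimal interior_subset hVcclosed).trans hVcsub
  have hV₀'sub : V₀' ⊆ V₀ := fun z hz => hclV₀' (subset_closure hz)
  have hNopen : IsOpen {s : T | s • y ∈ V₀'} :=
    hV₀'open.preimage (continuous_id.smul continuous_const)
  obtain ⟨s₁, hs₁⟩ : ∃ s, s • y ∈ V₀' :=
    exists_smul_mem_of_ap x₀ hap hyM' (hV₀'open.mem_nhds hx₀V₀')
  -- the key construction: a compact set `S` moving `y` into `V₀`,
  -- such that `t₀ A₀ S` is syndetic
  have key : ∃ S : Set T, IsCompact S ∧ (∀ s ∈ S, s • y ∈ V₀) ∧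
      Syndetic ((fun p : T × T => t₀ * p.1 * p.2) '' (A₀ ×ˢ S)) := by
    rcases hT with hC | hcomm
    · -- almost right C-semigroup case
      obtain ⟨s₀, hs₀G, hs₀N⟩ := hC.exists_mem_open hNopen ⟨s₁, hs₁⟩
      set Q := closure ((Set.range fun s : T => s * s₀)ᶜ) with hQdef
      have hQcpt : IsCompact Q := hs₀G
      set M := closure (orbitVia (fun (t : T) (z : X) => t • z) x₀) with hMdef
      have hMcpt : IsCompact M := isClosed_closure.isCompact
      have hMinv : ∀ (r : T), ∀ z ∈ M, r • z ∈ M := by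
        intro r z hz
        have h1 : (fun x : X => r • x) '' orbitVia (fun (t : T) (z : X) => t • z) x₀ ⊆
            orbitVia (fun (t : T) (z : X) => t • z) x₀ := by
          rintro _ ⟨_, ⟨t, rfl⟩, rfl⟩
          exact ⟨r * t, mul_smul r t x₀⟩
        have h2 : r • z ∈ (fun x : X => r • x) '' M := ⟨z, hz, rfl⟩
        have h3 := image_closure_subset_closure_image (f := fun x : X => r • x)
          (s := orbitVia (fun (t : T) (z : X) => t • z) x₀) (continuous_const_smul r)
        exact closure_mono h1 (h3 h2)
      have hcov : ∀ z ∈ M, ∃ w : T, z ∈ {x : X | w • x ∈ V₀'} := fun z hz =>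
        exists_smul_mem_of_ap x₀ hap hz (hV₀'open.mem_nhds hx₀V₀')
      obtain ⟨W, hW⟩ := hMcpt.elim_finite_subcover (fun w : T => {x : X | w • x ∈ V₀'})
        (fun w => hV₀'open.preimage (continuous_const_smul w))
        (fun z hz => Set.mem_iUnion.2 (hcov z hz))
      set WQ := (fun p : T × T => p.1 * p.2) '' ((W : Set T) ×ˢ Q) with hWQdef
      have hWQcpt : IsCompact WQ := (W.finite_toSet.isCompact.prod hQcpt).image continuous_mul
      set S := {s₀} ∪ (WQ ∩ {s : T | s • y ∈ closure V₀'}) with hSdef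
      have hScpt : IsCompact S :=
        isCompact_singleton.union (hWQcpt.inter_right
          (isClosed_closure.preimage (continuous_id.smul continuous_const)))
      refine ⟨S, hScpt, ?_, ?_⟩
      · rintro s (rfl | ⟨-, hs⟩)
        · exact hV₀'sub hs₀N
        · exact hclV₀' hs
      · refine ⟨((fun k => t₀ * k) '' K₀) ∪ ((fun w => t₀ * a₀ * w) '' (W : Set T)), ?_, ?_⟩
        · exact (hK₀cpt.image (continuous_const.mul continuous_id)).union
            (W.finite_toSet.isCompact.image
              (continuous_const.mul continuous_id))
        · intro r
          by_cases hr : r ∈ Set.range fun u : T => u * s₀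
          · obtain ⟨r₁, rfl⟩ := hr
            obtain ⟨k, hk, hkr⟩ := hK₀ r₁
            refine ⟨t₀ * k, Or.inl ⟨k, hk, rfl⟩, ⟨(k * r₁, s₀), ⟨hkr, Or.inl rfl⟩, ?_⟩⟩
            simp only [mul_assoc]
          · have hrQ : r ∈ Q := subset_closure hr
            have hryM : r • y ∈ M := hMinv r y hyM'
            obtain ⟨w, hwW, hwr⟩ : ∃ w ∈ W, w • (r • y) ∈ V₀' := by
              have := hW hryM
              simpa using this
            have hsS : w * r ∈ S := Or.inr ⟨⟨(w, r), ⟨hwW, hrQ⟩, rfl⟩, by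
              show (w * r) • y ∈ closure V₀'
              rw [mul_smul]; exact subset_closure hwr⟩
            refine ⟨t₀ * a₀ * w, Or.inr ⟨w, hwW, rfl⟩, ⟨(a₀, w * r), ⟨ha₀, hsS⟩, ?_⟩⟩
            simp only [mul_assoc]
    · -- abelian case
      refine ⟨{s₁}, isCompact_singleton, ?_, ?_⟩
      · rintro s rfl
        exact hV₀'sub hs₁
      · refine ⟨(fun k => t₀ * k * s₁) '' K₀, hK₀cpt.image
          ((continuous_const.mul continuous_id).mul continuous_const), ?_⟩
        intro r
        obtain ⟨k, hk, hkr⟩ := hK₀ r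
        refine ⟨t₀ * k * s₁, ⟨k, hk, rfl⟩, ⟨(k * r, s₁), ⟨hkr, rfl⟩, ?_⟩⟩
        simp only [mul_assoc]
        rw [hcomm s₁ r]
  obtain ⟨S, hScpt, hSy, hAsynd⟩ := key
  refine ⟨{z : X | ∀ s ∈ S, s • z ∈ V₀},
    (isOpen_forall_smul_mem hScpt hV₀open).mem_nhds (fun s hs => hSy s hs), _, hAsynd, ?_⟩
  rintro _ ⟨⟨a, s⟩, ⟨ha, hs⟩, rfl⟩ v hv
  show (t₀ * a * s) • v ∈ U
  have heq : (t₀ * a * s) • v = t₀ • (a • (s • v)) := by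
    rw [mul_smul, mul_smul]
  rw [heq]
  exact hU'sub (hA₀V₀ a ha _ (hv s hs))
end

section
/- Let (T,X) be a surjective semiflow with continuous preimage maps, and x₀ ∈ X. Then x₀ is a discrete Bohr a.a. point of (T,X) if and only if x₀ ∈ P_aa(T,X). -/
/-!
If `x₀` is discrete Bohr a.a. and `tₙx₀ → y`, `tₙx'ₙ = y`, `x'ₙ → x'`, pigeonhole gives one
`κ` of the finite set `K` with `κtₙ ∈ B` frequently. For such `n`, lower semicontinuity of the
fibres of `κtₙ` at `κy = lim κtₘx₀` puts `x'ₙ` in the closure of any prescribed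
neighbourhood `U` of `x₀`, so `x'` is a cluster point of `𝓝 x₀`, i.e. `x' = x₀`.

Conversely, an a.a. point admits no sequence `σ` with `σₘx₀ ∈ σₙD` for all `n < m` and a closed
`D ∌ x₀`: along an ultrafilter, `σₘx₀ → y ∈ ⋂ₙ σₙD`, and limits of points `zₙ ∈ D` with
`σₙzₙ = y` would equal `x₀`. Recursive constructions of such sequences show first that the
return times of `x₀` to a neighbourhood are discretely syndetic, and then that some open `V`
meeting the orbit satisfies `p⁻¹[qx₀] ⊆ F` whenever `px₀, qx₀ ∈ V`, for a closed
neighbourhood `F ⊆ U` of `x₀`; the construction shrinks `V` to `V ∩ p(Fᶜ)`, which stays open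
because the maps `t` are open by lower semicontinuity of their fibres. The return times of
`rx₀` to `V` then form the set `B`.
-/

open Filter Topology Set Uniformity

universe u v w

/-- The preimage maps of the semiflow are continuous (upper and lower semicontinuity of
`x ↦ t⁻¹[{x}]`). -/
def ContPreimagesVia {T : Type u} {X : Type v} [TopologicalSpace X] (act : T → X → X) : Prop :=
  ∀ t : T,
    (∀ (x : X) (U : Set X), IsOpen U → {z : X | act t z = x} ⊆ U →
      ∃ V ∈ 𝓝 x, ∀ y ∈ V, {z : X | act t z = y} ⊆ U) ∧
    (∀ (x : X) (U : Set X), IsOpen U → (U ∩ {z : X | act t z = x}).Nonempty →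
      ∃ V ∈ 𝓝 x, ∀ y ∈ V, (U ∩ {z : X | act t z = y}).Nonempty)

/-- `x` is a discrete Bohr a.a. point: for every entourage `ε` there is a discretely
syndetic `B ⊆ T` with `t₂⁻¹[{t₁ x}] ⊆ ε[x]` for all `t₁, t₂ ∈ B`. -/
def DiscBohrAAVia {T : Type u} {X : Type v} [UniformSpace X] (act : T → X → X)
    [Mul T] (x : X) : Prop :=
  ∀ ε ∈ 𝓤 X, ∃ B : Set T, DiscSyndetic B ∧
    ∀ t₁ ∈ B, ∀ t₂ ∈ B, ∀ z : X, act t₂ z = act t₁ x → (x, z) ∈ ε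

open Pointwise

/-- Points of members of `l`, directed by reverse inclusion of the members: the net that turns
limits along `l` into the net limits of `IsAAPointVia`. -/
structure FilterNet {α : Type} (l : Filter α) : Type w where
  point : α
  set : Set α
  set_mem : set ∈ l
  point_mem : point ∈ set

namespace FilterNet

variable {α : Type} {l : Filter α}

instance : Preorder (FilterNet.{w} l) := Preorder.lift fun i => OrderDual.toDual i.set

instance [l.NeBot] : Nonempty (FilterNet.{w} l) :=
  let ⟨a, ha⟩ := l.nonempty_of_mem univ_mem
  ⟨⟨a, univ, univ_mem, ha⟩⟩

instance [l.NeBot] : IsDirected (FilterNet.{w} l) (· ≤ ·) where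
  directed i j :=
    let ⟨a, ha⟩ := l.nonempty_of_mem (inter_mem i.set_mem j.set_mem)
    ⟨⟨a, i.set ∩ j.set, inter_mem i.set_mem j.set_mem, ha⟩, inter_subset_left, inter_subset_right⟩

theorem tendsto_point [l.NeBot] : Tendsto (point : FilterNet.{w} l → α) atTop l := by
  intro s hs
  obtain ⟨a, ha⟩ := l.nonempty_of_mem hs
  exact mem_map.2 <| mem_of_superset (mem_atTop (⟨a, s, hs, ha⟩ : FilterNet.{w} l)) fun i hi =>
    (show i.set ⊆ s from hi) i.point_mem

end FilterNet

theorem IsAAPointVia.eq_of_tendsto {T : Type*} {X : Type*} [TopologicalSpace X]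
    {act : T → X → X} {x : X} (h : IsAAPointVia act x) {α : Type} (l : Filter α) [l.NeBot]
    {t : α → T} {xn : α → X} {y x' : X} (hy : Tendsto (fun a => act (t a) x) l (𝓝 y))
    (hx' : Tendsto xn l (𝓝 x')) (hxn : ∀ a, act (t a) (xn a) = y) : x = x' :=
  h (FilterNet l) (t ∘ FilterNet.point) (xn ∘ FilterNet.point) y x'
    (hy.comp FilterNet.tendsto_point) (hx'.comp FilterNet.tendsto_point) fun i => hxn i.point

section ContPreimages

variable {T : Type*} {X : Type*} [TopologicalSpace X] {act : T → X → X}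

theorem ContPreimagesVia.isOpenMap (hcont : ContPreimagesVia act) (t : T) :
    IsOpenMap (act t) := by
  intro U hU
  rw [isOpen_iff_mem_nhds]
  rintro _ ⟨z, hzU, rfl⟩
  obtain ⟨V, hV, hVU⟩ := (hcont t).2 _ U hU ⟨z, hzU, rfl⟩
  exact mem_of_superset hV fun w hw =>
    let ⟨z', hz'U, hz'⟩ := hVU w hw
    ⟨z', hz'U, hz'⟩

theorem ContPreimagesVia.mem_closure_of_apply_eq (hcont : ContPreimagesVia act) {t : T}
    {F : Set X} {w z : X} (hw : w ∈ closure {w' | ∀ z', act t z' = w' → z' ∈ F})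
    (hz : act t z = w) : z ∈ closure F := by
  rw [mem_closure_iff]
  intro U hU hzU
  obtain ⟨V, hV, hVU⟩ := (hcont t).2 w U hU ⟨z, hzU, hz⟩
  obtain ⟨w', hw'V, hw'⟩ := mem_closure_iff_nhds.1 hw V hV
  obtain ⟨z', hz'U, hz'⟩ := hVU w' hw'V
  exact ⟨z', hz'U, hw' z' hz'⟩

end ContPreimages

def DiscBohrAANhds {T : Type*} {X : Type*} [Mul T] [TopologicalSpace X] (act : T → X → X)
    (x : X) : Prop :=
  ∀ U ∈ 𝓝 x, ∃ B : Set T, DiscSyndetic B ∧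
    ∀ t₁ ∈ B, ∀ t₂ ∈ B, ∀ z : X, act t₂ z = act t₁ x → z ∈ U

theorem discBohrAAVia_iff_discBohrAANhds {T : Type*} {X : Type*} [Mul T] [UniformSpace X]
    {act : T → X → X} {x : X} : DiscBohrAAVia act x ↔ DiscBohrAANhds act x := by
  constructor
  · intro h U hU
    obtain ⟨ε, hε, hεU⟩ := UniformSpace.mem_nhds_iff.1 hU
    obtain ⟨B, hB, hBε⟩ := h ε hε
    exact ⟨B, hB, fun t₁ h₁ t₂ h₂ z hz => hεU (hBε t₁ h₁ t₂ h₂ z hz)⟩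
  · intro h ε hε
    exact h _ (UniformSpace.ball_mem_nhds x hε)

theorem exists_seq_mul_notMem_of_not_discSyndetic {M : Type*} [Monoid M] {R : Set M}
    (hR : ¬DiscSyndetic R) : ∃ σ : ℕ → M, ∀ n m, n < m → ∃ p ∉ R, σ m = σ n * p := by
  classical
  have hτ : ∀ K : Finset M, ∃ τ, ∀ k ∈ K, k * τ ∉ R := fun K => by
    by_contra! hK
    exact hR ⟨K, K.finite_toSet, hK⟩
  choose τ hτ using hτ
  -- the state `(σₘ, Kₘ)` records the products `τₙ ⋯ τₘ₋₁` for `n ≤ m` in `Kₘ`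
  let step : M × Finset M → M × Finset M := fun s =>
    (s.1 * τ s.2, insert 1 (s.2.image (· * τ s.2)))
  let st : ℕ → M × Finset M := fun n => step^[n] (1, {1})
  have hsucc : ∀ m, st (m + 1) = step (st m) := fun m => Function.iterate_succ_apply' _ _ _
  have hst : ∀ m, ∀ n ≤ m, ∃ p ∈ (st m).2, (st m).1 = (st n).1 * p := by
    intro m
    induction m with
    | zero => exact fun n hn => ⟨1, Finset.mem_singleton_self 1, by rw [Nat.le_zero.1 hn, mul_one]⟩
    | succ m ih =>
      intro n hn
      rcases hn.eq_or_lt with rfl | hn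
      · exact ⟨1, by rw [hsucc]; exact Finset.mem_insert_self _ _, (mul_one _).symm⟩
      obtain ⟨p, hp, hpm⟩ := ih n (Nat.lt_succ_iff.1 hn)
      refine ⟨p * τ (st m).2, ?_, by rw [hsucc, ← mul_assoc, ← hpm]⟩
      rw [hsucc]
      exact Finset.mem_insert_of_mem (Finset.mem_image_of_mem _ hp)
  refine ⟨fun n => (st n).1, fun n m hnm => ?_⟩
  obtain ⟨m, rfl⟩ := Nat.exists_eq_add_of_lt hnm
  obtain ⟨p, hp, hpm⟩ := hst (n + m) n (Nat.le_add_right n m)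
  refine ⟨p * τ (st (n + m)).2, hτ _ p hp, ?_⟩
  show (st (n + m + 1)).1 = (st n).1 * _
  rw [hsucc, ← mul_assoc, ← hpm]

section Action

variable {T : Type*} {X : Type*} [Monoid T] [MulAction T X] [TopologicalSpace X]
  [ContinuousConstSMul T X] {x₀ : X}

theorem DiscBohrAANhds.isAAPointVia [T2Space X]
    (hcont : ContPreimagesVia fun (t : T) (z : X) => t • z)
    (hB : DiscBohrAANhds (fun (t : T) (z : X) => t • z) x₀) :
    IsAAPointVia (fun (t : T) (z : X) => t • z) x₀ := by
  intro ι _ _ _ t xn y x' hty hxn hxy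
  refine (eq_of_nhds_neBot (clusterPt_iff_forall_mem_closure.2 fun U hU => ?_)).symm
  obtain ⟨B, ⟨K, hK, hKB⟩, hBU⟩ := hB U hU
  choose k hkK hkB using fun n => hKB (t n)
  obtain ⟨κ, -, hκ⟩ : ∃ κ ∈ K, ∃ᶠ n in atTop, k n = κ :=
    hK.frequently_exists.1 (Frequently.of_forall fun n => ⟨k n, hkK n, rfl⟩)
  refine isClosed_closure.mem_of_frequently_of_tendsto (hκ.mono fun n hn => ?_) hxn
  -- `κ y` is a limit of points `κ tₘ x₀` whose fibres under `κ tₙ` lie in `U`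
  have hκy : κ • y ∈ closure {w | ∀ z, (κ * t n) • z = w → z ∈ U} := by
    refine mem_closure_of_frequently_of_tendsto (hκ.mono fun m hm z hz => ?_)
      (((continuous_const_smul κ).tendsto y).comp hty)
    exact hBU _ (hm ▸ hkB m) _ (hn ▸ hkB n) z (hz.trans (mul_smul κ (t m) x₀).symm)
  exact hcont.mem_closure_of_apply_eq hκy (by rw [mul_smul]; exact congrArg _ (hxy n))

theorem IsAAPointVia.mem_of_smul_mem_smul_set [CompactSpace X] [T2Space X]
    (h : IsAAPointVia (fun (t : T) (z : X) => t • z) x₀) {D : Set X} (hD : IsClosed D)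
    (σ : ℕ → T) (hσ : ∀ n m, n < m → σ m • x₀ ∈ σ n • D) : x₀ ∈ D := by
  let 𝒰 := Ultrafilter.of (atTop : Filter ℕ)
  have hy : Tendsto (fun m => σ m • x₀) 𝒰 (𝓝 _) := (𝒰.map fun m => σ m • x₀).le_nhds_lim
  have hyD : ∀ n, (𝒰.map fun m => σ m • x₀).lim ∈ σ n • D := fun n => by
    refine IsClosed.mem_of_tendsto ?_ hy <|
      Eventually.mono (Ultrafilter.of_le _ (eventually_gt_atTop n)) fun m => hσ n m
    rw [← image_smul]
    exact (hD.isCompact.image (continuous_const_smul (σ n))).isClosed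
  choose z hzD hz using fun n => mem_smul_set.1 (hyD n)
  have hz' : Tendsto z 𝒰 (𝓝 _) := (𝒰.map z).le_nhds_lim
  rw [h.eq_of_tendsto 𝒰 hy hz' hz]
  exact hD.mem_of_tendsto hz' (.of_forall hzD)

theorem IsAAPointVia.discSyndetic_setOf_smul_mem [CompactSpace X] [T2Space X]
    (h : IsAAPointVia (fun (t : T) (z : X) => t • z) x₀) {N : Set X} (hN : N ∈ 𝓝 x₀) :
    DiscSyndetic {t : T | t • x₀ ∈ N} := by
  by_contra hR
  obtain ⟨σ, hσ⟩ := exists_seq_mul_notMem_of_not_discSyndetic hR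
  refine absurd (mem_interior_iff_mem_nhds.2 hN) <|
    h.mem_of_smul_mem_smul_set isOpen_interior.isClosed_compl σ fun n m hnm => ?_
  obtain ⟨p, hp, hpm⟩ := hσ n m hnm
  exact ⟨p • x₀, fun hpN => hp (interior_subset (s := N) hpN), by rw [hpm, mul_smul]⟩

theorem IsAAPointVia.exists_isOpen_forall_smul_eq_mem [CompactSpace X] [T2Space X]
    (h : IsAAPointVia (fun (t : T) (z : X) => t • z) x₀)
    (hopen : ∀ t : T, IsOpenMap fun z : X => t • z) {F : Set X} (hF : IsClosed F)
    (hFx : F ∈ 𝓝 x₀) :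
    ∃ V : Set X, IsOpen V ∧ (∃ r : T, r • x₀ ∈ V) ∧
      ∀ p q : T, p • x₀ ∈ V → q • x₀ ∈ V → ∀ z, p • z = q • x₀ → z ∈ F := by
  by_contra! hfail
  let S := {V : Set X // IsOpen V ∧ ∃ r : T, r • x₀ ∈ V}
  choose p q hp hq z hpz hzF using fun V : S => hfail V.1 V.2.1 V.2.2
  let next : S → S := fun V => ⟨V.1 ∩ p V • Fᶜ,
    V.2.1.inter (by rw [← image_smul]; exact hopen _ _ hF.isOpen_compl),
    q V, hq V, z V, hzF V, hpz V⟩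
  let Vs : ℕ → S := fun n => next^[n] ⟨univ, isOpen_univ, 1, mem_univ _⟩
  have hsucc : ∀ n, Vs (n + 1) = next (Vs n) := fun n => Function.iterate_succ_apply' _ _ _
  have hanti : Antitone fun n => (Vs n).1 :=
    antitone_nat_of_succ_le fun n => by rw [hsucc]; exact inter_subset_left
  refine absurd (mem_interior_iff_mem_nhds.2 hFx) <|
    h.mem_of_smul_mem_smul_set isOpen_interior.isClosed_compl (fun n => p (Vs n))
      fun n m hnm => ?_
  have hm : p (Vs m) • x₀ ∈ (Vs (n + 1)).1 := hanti hnm (hp (Vs m))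
  rw [hsucc] at hm
  exact smul_set_mono (compl_subset_compl.2 interior_subset) hm.2

theorem IsAAPointVia.discBohrAANhds [CompactSpace X] [T2Space X]
    (h : IsAAPointVia (fun (t : T) (z : X) => t • z) x₀)
    (hopen : ∀ t : T, IsOpenMap fun z : X => t • z) :
    DiscBohrAANhds (fun (t : T) (z : X) => t • z) x₀ := by
  intro U hU
  obtain ⟨F, hFx, hF, hFU⟩ := exists_mem_nhds_isClosed_subset hU
  obtain ⟨V, hV, ⟨r, hr⟩, hVF⟩ := h.exists_isOpen_forall_smul_eq_mem hopen hF hFx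
  refine ⟨{t | t • x₀ ∈ (r • ·) ⁻¹' V},
    h.discSyndetic_setOf_smul_mem ((hV.preimage (continuous_const_smul r)).mem_nhds hr),
    fun t₁ h₁ t₂ h₂ z hz => hFU (hVF (r * t₂) (r * t₁) ?_ ?_ z ?_)⟩
  · rwa [mul_smul]
  · rwa [mul_smul]
  · rw [mul_smul, mul_smul]
    exact congrArg _ hz

end Action

theorem discrete_bohr_aa_iff_aa_point_general
    {T : Type u} {X : Type v} [Monoid T] [TopologicalSpace T]
    [UniformSpace X] [CompactSpace X] [T2Space X]
    [MulAction T X] [ContinuousSMul T X]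
    (hcont : ContPreimagesVia fun (t : T) (z : X) => t • z)
    (x₀ : X) :
    DiscBohrAAVia (fun (t : T) (z : X) => t • z) x₀ ↔
      IsAAPointVia (fun (t : T) (z : X) => t • z) x₀ := by
  rw [discBohrAAVia_iff_discBohrAANhds]
  exact ⟨fun h => h.isAAPointVia hcont, fun h => h.discBohrAANhds hcont.isOpenMap⟩

/-- Let `(T,X)` be a surjective semiflow with continuous preimage maps. Then `x₀` is a
discrete Bohr a.a. point iff `x₀ ∈ P_aa(T,X)`. -/
theorem discrete_bohr_aa_iff_aa_point
    {T : Type u} {X : Type v} [Monoid T] [TopologicalSpace T] [ContinuousMul T]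
    [UniformSpace X] [CompactSpace X] [T2Space X] [Nonempty X]
    [MulAction T X] [ContinuousSMul T X]
    (hsurj : ∀ t : T, Function.Surjective fun z : X => t • z)
    (hcont : ContPreimagesVia fun (t : T) (z : X) => t • z)
    (x₀ : X) :
    DiscBohrAAVia (fun (t : T) (z : X) => t • z) x₀ ↔
      IsAAPointVia (fun (t : T) (z : X) => t • z) x₀ :=
  discrete_bohr_aa_iff_aa_point_general hcont x₀
end

section
/- Let (T,X) and (T,Y) be two minimal semiflows. If π : (T,X) → (T,Y) is an almost 1-1 epimorphism and (T,Y) is equicontinuous and surjective, then (T,X) is an a.a. semiflow and {x ∈ X : π⁻¹[{π(x)}] = {x}} ⊆ P_aa(T,X). -/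
open Filter Topology Set Uniformity

universe u v w

/-! An equicontinuous semiflow has, inside every entourage, a symmetric invariant one `δ`.
Let `t` act surjectively on the compact space `Y` and pick `w_k ∈ Y × Y` with
`t ^ k • w_k = (a, b)`; two of them, `w_m` and `w_n` with `m < n`, are `δ`-close, and applying
`t ^ m` shows that `t ^ (n - m)` moves both `a` and `b` by less than `δ`. Hence
`(t • a, t • b) ∈ δ` forces `(a, b) ∈ δ ○ δ ○ δ`, uniformly in `t`, so `t_n • a → c = t_n • b_n`
forces `b_n → a`: every point of `Y` is almost automorphic, and this lifts through `π` to every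
point with a singleton fiber. -/

open scoped SetRel

section Recurrence

variable {Z : Type*} [UniformSpace Z] [CompactSpace Z]

theorem exists_pos_iterate_mem_of_surjective {f : Z → Z} (hf : Function.Surjective f)
    {δ : SetRel Z Z} (hδ : δ ∈ 𝓤 Z) (hfδ : MapsTo (Prod.map f f) δ δ) (u : Z) :
    ∃ n, 0 < n ∧ (f^[n] u, u) ∈ δ := by
  obtain ⟨d, hd, _, hdδ⟩ := comp_symm_mem_uniformity_sets hδ
  choose w hw using fun k => hf.iterate k u
  obtain ⟨z, hz⟩ := exists_clusterPt_of_compactSpace (map w atTop)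
  have hfreq : ∃ᶠ k in atTop, w k ∈ UniformSpace.ball z d :=
    mapClusterPt_iff_frequently.1 hz _ (UniformSpace.ball_mem_nhds z hd)
  obtain ⟨m, hm⟩ := hfreq.exists
  obtain ⟨n, hmn, hn⟩ := frequently_atTop.1 hfreq (m + 1)
  have hwmn : (w m, w n) ∈ δ := hdδ (SetRel.prodMk_mem_comp (SetRel.symm d hm) hn)
  have hu : (u, f^[m] (w n)) ∈ δ := by
    simpa only [Prod.map_iterate, Prod.map_apply, hw] using (hfδ.iterate m) hwmn
  refine ⟨n - m, by omega, ?_⟩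
  simpa only [Prod.map_iterate, Prod.map_apply, ← Function.iterate_add_apply,
    Nat.sub_add_cancel (by omega : m ≤ n), hw] using (hfδ.iterate (n - m)) hu

theorem mem_comp_comp_of_apply_mem {f : Z → Z} (hf : Function.Surjective f)
    {δ : SetRel Z Z} [δ.IsSymm] (hδ : δ ∈ 𝓤 Z) (hfδ : MapsTo (Prod.map f f) δ δ) {a b : Z}
    (hab : (f a, f b) ∈ δ) : (a, b) ∈ δ ○ δ ○ δ := by
  obtain ⟨n, hn, hna, hnb⟩ : ∃ n, 0 < n ∧ (f^[n] a, a) ∈ δ ∧ (f^[n] b, b) ∈ δ := by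
    simpa only [Prod.map_iterate, Prod.map_apply, mem_entourageProd] using
      exists_pos_iterate_mem_of_surjective (hf.prodMap hf) (entourageProd_mem_uniformity hδ hδ)
        (fun _ hp => ⟨hfδ hp.1, hfδ hp.2⟩) (a, b)
  have hfn : (f^[n] a, f^[n] b) ∈ δ := by
    obtain ⟨k, rfl⟩ : ∃ k, n = k + 1 := ⟨n - 1, by omega⟩
    simpa only [Prod.map_iterate, Prod.map_apply, Function.iterate_succ_apply] using
      (hfδ.iterate k) hab
  exact ⟨_, ⟨_, SetRel.symm δ hna, hfn⟩, hnb⟩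

end Recurrence

section Equicontinuous

variable {T Y : Type*} [Monoid T] [MulAction T Y] [UniformSpace Y]

theorem EquicontSF.exists_invariant_symm_subset (hY : EquicontSF fun (t : T) (y : Y) => t • y)
    {γ : SetRel Y Y} [γ.IsSymm] (hγ : γ ∈ 𝓤 Y) :
    ∃ δ : SetRel Y Y, δ ∈ 𝓤 Y ∧ δ ⊆ γ ∧ SetRel.IsSymm δ ∧
      ∀ t : T, MapsTo (Prod.map (t • ·) (t • ·)) δ δ := by
  obtain ⟨δ₀, hδ₀, hδ₀γ⟩ := hY γ hγ
  refine ⟨{p | ∀ s : T, (s • p.1, s • p.2) ∈ γ}, mem_of_superset hδ₀ fun p hp => hδ₀γ p hp,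
    fun p hp => by simpa only [one_smul] using hp 1, ⟨fun a b h s => SetRel.symm γ (h s)⟩,
    fun t p hp s => by simpa only [Prod.map_fst, Prod.map_snd, smul_smul] using hp (s * t)⟩

theorem EquicontSF.exists_mem_uniformity_smul_mem_imp [CompactSpace Y]
    (hY : EquicontSF fun (t : T) (y : Y) => t • y)
    (hsurj : ∀ t : T, Function.Surjective fun y : Y => t • y) {W : SetRel Y Y} (hW : W ∈ 𝓤 Y) :
    ∃ δ ∈ 𝓤 Y, ∀ (t : T) (a b : Y), (t • a, t • b) ∈ δ → (a, b) ∈ W := by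
  obtain ⟨γ, hγ, _, hγW⟩ := comp_comp_symm_mem_uniformity_sets hW
  obtain ⟨δ, hδ, hδγ, _, hδinv⟩ := hY.exists_invariant_symm_subset hγ
  refine ⟨δ, hδ, fun t a b hab => hγW ?_⟩
  obtain ⟨c, ⟨d, had, hdc⟩, hcb⟩ := mem_comp_comp_of_apply_mem (hsurj t) hδ (hδinv t) hab
  exact ⟨c, ⟨d, hδγ had, hδγ hdc⟩, hδγ hcb⟩

theorem EquicontSF.isAAPointVia [CompactSpace Y] [T2Space Y]
    (hY : EquicontSF fun (t : T) (y : Y) => t • y)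
    (hsurj : ∀ t : T, Function.Surjective fun y : Y => t • y) (a : Y) :
    IsAAPointVia.{_, _, w} (fun (t : T) (y : Y) => t • y) a := by
  intro ι _ _ _ t b c b' hta hb htb
  refine tendsto_nhds_unique
    ((nhds_basis_uniformity' (𝓤 Y).basis_sets).tendsto_right_iff.2 fun W hW => ?_) hb
  obtain ⟨δ, hδ, hδW⟩ := hY.exists_mem_uniformity_smul_mem_imp hsurj hW
  filter_upwards [hta (mem_nhds_right c hδ)] with n hn
  exact hδW (t n) a (b n) (by rwa [show t n • b n = c from htb n])

end Equicontinuous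

theorem IsAAPointVia.of_map {T X Y : Type*} [SMul T X] [SMul T Y] [TopologicalSpace X]
    [TopologicalSpace Y] {π : X → Y} (hπ : Continuous π)
    (hequivar : ∀ (t : T) (x : X), π (t • x) = t • π x) {x : X}
    (hx : IsAAPointVia.{_, _, w} (fun (t : T) (y : Y) => t • y) (π x))
    (hfiber : ∀ x' : X, π x' = π x → x' = x) :
    IsAAPointVia.{_, _, w} (fun (t : T) (z : X) => t • z) x := by
  intro ι _ _ _ t xn y x' htx hxn htxn
  have hπx : π x = π x' := by
    refine hx ι t (π ∘ xn) (π y) (π x') ?_ ((hπ.tendsto x').comp hxn) fun n => ?_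
    · simpa only [Function.comp_def, hequivar] using (hπ.tendsto y).comp htx
    · simp only [Function.comp_apply, ← hequivar, htxn n]
  exact (hfiber x' hπx.symm).symm

theorem almost_one_one_extension_of_equicontinuous_is_aa_general
    {T : Type u} {X : Type v} {Y : Type v} [Monoid T] [UniformSpace X] [MulAction T X]
    [UniformSpace Y] [CompactSpace Y] [T2Space Y] [MulAction T Y]
    (hminX : MinimalSF fun (t : T) (z : X) => t • z)
    (π : X → Y) (hcont : Continuous π)
    (hequivar : ∀ (t : T) (z : X), π (t • z) = t • π z)
    (ha11 : ∃ y : Y, ∃! z : X, π z = y)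
    (hYeq : EquicontSF fun (t : T) (z : Y) => t • z)
    (hYsurj : ∀ t : T, Function.Surjective fun z : Y => t • z) :
    (∃ x : X, IsAAPointVia (fun (t : T) (z : X) => t • z) x ∧
        Dense (orbitVia (fun (t : T) (z : X) => t • z) x)) ∧
      ∀ x : X, (∀ x' : X, π x' = π x → x' = x) →
        IsAAPointVia (fun (t : T) (z : X) => t • z) x := by
  obtain ⟨_, x₀, rfl, hx₀⟩ := ha11
  exact ⟨⟨x₀, (hYeq.isAAPointVia hYsurj _).of_map hcont hequivar hx₀, hminX x₀⟩,
    fun x hx => (hYeq.isAAPointVia hYsurj _).of_map hcont hequivar hx⟩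

/-- Let `(T,X)` and `(T,Y)` be minimal semiflows. If `π : (T,X) → (T,Y)` is an almost 1-1
epimorphism and `(T,Y)` is equicontinuous and surjective, then `(T,X)` is an a.a. semiflow
and `{x : π⁻¹[{π x}] = {x}} ⊆ P_aa(T,X)`. -/
theorem almost_one_one_extension_of_equicontinuous_is_aa
    {T : Type u} {X : Type v} {Y : Type v} [Monoid T] [TopologicalSpace T] [ContinuousMul T]
    [UniformSpace X] [CompactSpace X] [T2Space X] [Nonempty X]
    [MulAction T X] [ContinuousSMul T X]
    [UniformSpace Y] [CompactSpace Y] [T2Space Y] [Nonempty Y]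
    [MulAction T Y] [ContinuousSMul T Y]
    (hminX : MinimalSF fun (t : T) (z : X) => t • z)
    (hminY : MinimalSF fun (t : T) (z : Y) => t • z)
    (π : X → Y) (hcont : Continuous π) (hsurjπ : Function.Surjective π)
    (hequivar : ∀ (t : T) (z : X), π (t • z) = t • π z)
    (ha11 : ∃ y : Y, ∃! z : X, π z = y)
    (hYeq : EquicontSF fun (t : T) (z : Y) => t • z)
    (hYsurj : ∀ t : T, Function.Surjective fun z : Y => t • z) :
    (∃ x : X, IsAAPointVia (fun (t : T) (z : X) => t • z) x ∧
        Dense (orbitVia (fun (t : T) (z : X) => t • z) x)) ∧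
      ∀ x : X, (∀ x' : X, π x' = π x → x' = x) →
        IsAAPointVia (fun (t : T) (z : X) => t • z) x :=
  almost_one_one_extension_of_equicontinuous_is_aa_general hminX π hcont hequivar ha11 hYeq hYsurj
end

section
/- Let (T,X) be a minimal invertible semiflow and x ∈ X. Then: (1) V[x] is a dense subset of D[x]; and (2) if X is metrizable, then V[x] = D[x]. -/
open Filter Topology Set Uniformity

universe u v w

/-- The Veech relation `x' ∈ V[x]`: there exist `y`, a net `{t_n}` in `T` and a net
`{x'_n}` in `X` with `t_n x → y`, `x'_n → x'` and `t_n x'_n = y` for all `n`. -/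
def VrelVia {T : Type u} {X : Type v} [TopologicalSpace X] (act : T → X → X)
    (x x' : X) : Prop :=
  ∃ (ι : Type w) (pι : Preorder ι),
    letI := pι
    IsDirected ι (· ≤ ·) ∧ Nonempty ι ∧
      ∃ (t : ι → T) (xn : ι → X) (y : X),
        Tendsto (fun n => act (t n) x) atTop (𝓝 y) ∧
        Tendsto xn atTop (𝓝 x') ∧
        ∀ n, act (t n) (xn n) = y

/-- The cell `D[x] = ⋂_{ε ∈ 𝒰_X} cls (⋃ {t⁻¹[{s x}] : s,t ∈ N_T(x,ε[x])})`. -/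
def Dcell {T : Type u} {X : Type v} [UniformSpace X] (act : T → X → X) (x : X) : Set X :=
  ⋂ ε ∈ 𝓤 X, closure (⋃ s ∈ {t : T | (x, act t x) ∈ ε}, ⋃ t ∈ {t : T | (x, act t x) ∈ ε},
    {z : X | act t z = act s x})

/-- The cell `U[x]`: points `y` such that there are nets `y_n → y` and `{t_n}` in `T`
with `t_n x → x` and `t_n y_n → x`. -/
def Ucell {T : Type u} {X : Type v} [TopologicalSpace X] (act : T → X → X) (x : X) : Set X :=
  {y : X | ∃ (ι : Type w) (pι : Preorder ι),
    letI := pι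
    IsDirected ι (· ≤ ·) ∧ Nonempty ι ∧
      ∃ (t : ι → T) (yn : ι → X),
        Tendsto yn atTop (𝓝 y) ∧
        Tendsto (fun n => act (t n) x) atTop (𝓝 x) ∧
        Tendsto (fun n => act (t n) (yn n)) atTop (𝓝 x)}

section VeechAux

variable {T : Type u} {X : Type v} [Monoid T] [TopologicalSpace T] [ContinuousMul T]
  [UniformSpace X] [CompactSpace X] [T2Space X] [Nonempty X]
  [MulAction T X] [ContinuousSMul T X]

/-- Any filter limit realization of the Veech data gives a genuine net (with index type in
universe `w`) witnessing the Veech relation. -/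
private lemma vrel_of_filter {α : Type} (x : X) (F : Filter α) [F.NeBot]
    (t : α → T) (xn : α → X) (y x'' : X)
    (h1 : Tendsto (fun a => t a • x) F (𝓝 y))
    (h2 : Tendsto xn F (𝓝 x''))
    (h3 : ∀ a, t a • xn a = y) :
    VrelVia.{u,v,w} (fun (t : T) (z : X) => t • z) x x'' := by
  classical
  let I : Type w := ULift.{w} {p : Set α × α // p.1 ∈ F ∧ p.2 ∈ p.1}
  letI pord : Preorder I :=
    { le := fun a b => b.down.1.1 ⊆ a.down.1.1
      le_refl := fun a => subset_rfl
      le_trans := fun a b c hab hbc => Set.Subset.trans hbc hab }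
  have hdir : IsDirected I (· ≤ ·) := by
    constructor
    intro a b
    have hmem : a.down.1.1 ∩ b.down.1.1 ∈ F := inter_mem a.down.2.1 b.down.2.1
    obtain ⟨n, hn⟩ := Filter.nonempty_of_mem hmem
    exact ⟨⟨⟨(_, n), hmem, hn⟩⟩, fun _ h => h.1, fun _ h => h.2⟩
  have hne : Nonempty I := by
    obtain ⟨n, -⟩ := Filter.nonempty_of_mem (univ_mem (f := F))
    exact ⟨⟨⟨(Set.univ, n), univ_mem, mem_univ n⟩⟩⟩
  have hφ : Tendsto (fun p : I => p.down.1.2) atTop F := by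
    refine Filter.tendsto_def.2 fun S hS => ?_
    obtain ⟨n, hn⟩ := Filter.nonempty_of_mem hS
    refine mem_atTop_sets.2 ⟨(⟨⟨(S, n), hS, hn⟩⟩ : I), fun b hb => ?_⟩
    exact hb b.down.2.2
  refine ⟨I, pord, hdir, hne, fun p => t p.down.1.2, fun p => xn p.down.1.2, y,
    h1.comp hφ, h2.comp hφ, fun p => h3 _⟩

/-- The key recursion: starting from `z ∈ D[x]`, produce a point of `V[x]` lying in the
closure of every member of a decreasing sequence of open neighbourhoods of `z`. -/
private lemma vrel_main (hmin : MinimalSF fun (t : T) (z : X) => t • z)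
    (hinv : ∀ t : T, Function.Bijective fun z : X => t • z)
    (x z : X) (hz : z ∈ Dcell (fun (t : T) (z : X) => t • z) x)
    (W : ℕ → Set X) (hWo : ∀ k, IsOpen (W k)) (hWz : ∀ k, z ∈ W k)
    (hWa : ∀ k l, k ≤ l → W l ⊆ W k) :
    ∃ x'', VrelVia.{u,v,w} (fun (t : T) (z : X) => t • z) x x'' ∧
      ∀ k, x'' ∈ closure (W k) := by
  classical
  have step : ∀ (V : {V : Set X // IsOpen V ∧ V.Nonempty}) (k : ℕ),
      ∃ p : T × {V : Set X // IsOpen V ∧ V.Nonempty},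
        p.1 • x ∈ V.1 ∧ closure p.2.1 ⊆ V.1 ∧
          closure p.2.1 ⊆ (fun w => p.1 • w) '' (W k) := by
    rintro ⟨V, hVo, hVne⟩ k
    obtain ⟨_, ⟨r, rfl⟩, hrV⟩ := (hmin x).exists_mem_open hVo hVne
    have hU : (fun w : X => r • w) ⁻¹' V ∈ 𝓝 x :=
      ((continuous_const_smul r).continuousAt).preimage_mem_nhds (hVo.mem_nhds hrV)
    obtain ⟨ε, hε, hball⟩ := UniformSpace.mem_nhds_iff.1 hU
    have hcl := Set.mem_iInter₂.1 hz ε hε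
    obtain ⟨w, hwW, hwS⟩ := mem_closure_iff.1 hcl (W k) (hWo k) (hWz k)
    simp only [mem_iUnion, mem_setOf_eq, exists_prop] at hwS
    obtain ⟨s', hs', t', ht', hts⟩ := hwS
    have hcont : Continuous fun w : X => (r * t') • w := continuous_const_smul _
    let e : X ≃ₜ X :=
      Continuous.homeoOfEquivCompactToT2 (f := Equiv.ofBijective _ (hinv (r * t'))) hcont
    have heq : ⇑e = fun w : X => (r * t') • w := rfl
    have himo : IsOpen ((fun w : X => (r * t') • w) '' (W k)) := by
      rw [← heq]; exact e.isOpenMap _ (hWo k)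
    have hGo : IsOpen (V ∩ (fun w : X => (r * t') • w) '' (W k)) := hVo.inter himo
    have hξV : (r * t') • w ∈ V := by
      rw [mul_smul, hts]
      exact hball hs'
    have hξG : (r * t') • w ∈ V ∩ (fun w : X => (r * t') • w) '' (W k) :=
      ⟨hξV, ⟨w, hwW, rfl⟩⟩
    obtain ⟨C, hC, hCc, hCsub⟩ := exists_mem_nhds_isClosed_subset (hGo.mem_nhds hξG)
    refine ⟨(r * t', ⟨interior C, isOpen_interior,
      ⟨_, mem_interior_iff_mem_nhds.2 hC⟩⟩), ?_, ?_, ?_⟩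
    · show (r * t') • x ∈ V
      rw [mul_smul]
      exact hball ht'
    · exact (closure_minimal interior_subset hCc).trans (hCsub.trans inter_subset_left)
    · exact (closure_minimal interior_subset hCc).trans (hCsub.trans inter_subset_right)
  choose f hf1 hf2 hf3 using step
  let Vs : ℕ → {V : Set X // IsOpen V ∧ V.Nonempty} := fun k =>
    Nat.rec ⟨Set.univ, isOpen_univ, univ_nonempty⟩ (fun k Vk => (f Vk k).2) k
  let ts : ℕ → T := fun k => (f (Vs k) k).1
  have hA1 : ∀ k, ts k • x ∈ (Vs k).1 := fun k => hf1 _ _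
  have hA2 : ∀ k, closure (Vs (k + 1)).1 ⊆ (Vs k).1 := fun k => hf2 _ _
  have hA3 : ∀ k, closure (Vs (k + 1)).1 ⊆ (fun w => ts k • w) '' (W k) := fun k => hf3 _ _
  have hmono : ∀ k l, k ≤ l → (Vs l).1 ⊆ (Vs k).1 := by
    intro k l hkl
    induction l, hkl using Nat.le_induction with
    | base => exact subset_rfl
    | succ l hkl ih => exact (subset_closure.trans (hA2 l)).trans ih
  obtain ⟨𝒰, h𝒰⟩ := Filter.exists_ultrafilter_le (atTop : Filter ℕ)
  obtain ⟨y, -, hy⟩ := isCompact_univ.ultrafilter_le_nhds (𝒰.map fun k => ts k • x)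
    (le_principal_iff.2 univ_mem)
  have hty : Tendsto (fun k => ts k • x) (𝒰 : Filter ℕ) (𝓝 y) := by
    rw [Filter.Tendsto, ← Ultrafilter.coe_map]; exact hy
  have hyV : ∀ k, y ∈ closure (Vs (k + 1)).1 := by
    intro k
    refine mem_closure_of_tendsto hty (h𝒰 ?_)
    filter_upwards [eventually_ge_atTop (k + 1)] with j hj
    exact hmono (k + 1) j hj (hA1 j)
  have hwk : ∀ k, ∃ w ∈ W k, ts k • w = y := by
    intro k
    obtain ⟨w, hw, hweq⟩ := (hA3 k) (hyV k)
    exact ⟨w, hw, hweq⟩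
  choose wk hwk1 hwk2 using hwk
  obtain ⟨x'', -, hx''⟩ := isCompact_univ.ultrafilter_le_nhds (𝒰.map wk)
    (le_principal_iff.2 univ_mem)
  have htx'' : Tendsto wk (𝒰 : Filter ℕ) (𝓝 x'') := by
    rw [Filter.Tendsto, ← Ultrafilter.coe_map]; exact hx''
  refine ⟨x'', vrel_of_filter x (𝒰 : Filter ℕ) ts wk y x'' hty htx'' hwk2, fun k => ?_⟩
  refine mem_closure_of_tendsto htx'' (h𝒰 ?_)
  filter_upwards [eventually_ge_atTop k] with j hj
  exact hWa k j hj (hwk1 j)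

/-- `V[x] ⊆ D[x]`. -/
private lemma vrel_subset_Dcell (hmin : MinimalSF fun (t : T) (z : X) => t • z)
    (hinv : ∀ t : T, Function.Bijective fun z : X => t • z) (x : X) :
    {x' : X | VrelVia.{u,v,w} (fun (t : T) (z : X) => t • z) x x'} ⊆
      Dcell (fun (t : T) (z : X) => t • z) x := by
  intro x' hx'
  obtain ⟨ι, pι, hdir, hne, tν, xν, y, h1, h2, h3⟩ := hx'
  haveI := hdir; haveI := hne
  apply Set.mem_iInter₂.2
  intro ε hε
  rw [mem_closure_iff]
  intro O hOo hx'O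
  obtain ⟨δ, ⟨hδu, hδo⟩, hδε⟩ := uniformity_hasBasis_open.mem_iff.1 hε
  obtain ⟨_, ⟨r, rfl⟩, hry⟩ := (hmin y).exists_mem_open (UniformSpace.isOpen_ball x hδo)
    ⟨x, UniformSpace.mem_ball_self x hδu⟩
  have h1' : Tendsto (fun n => r • (tν n • x)) atTop (𝓝 (r • y)) := h1.const_smul r
  have ev1 : ∀ᶠ n in (atTop : Filter ι), r • (tν n • x) ∈ UniformSpace.ball x δ :=
    h1' ((UniformSpace.isOpen_ball x hδo).mem_nhds hry)
  have ev2 : ∀ᶠ n in (atTop : Filter ι), xν n ∈ O := h2 (hOo.mem_nhds hx'O)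
  obtain ⟨n, hn1, hn2⟩ := (ev1.and ev2).exists
  have h3' : tν n • xν n = y := h3 n
  have hkey : (r * tν n) • xν n = r • y := by rw [mul_smul, h3']
  have hcont : Continuous fun w : X => (r * tν n) • w := continuous_const_smul _
  let e : X ≃ₜ X :=
    Continuous.homeoOfEquivCompactToT2 (f := Equiv.ofBijective _ (hinv (r * tν n))) hcont
  have heq : ⇑e = fun w : X => (r * tν n) • w := rfl
  have himo : IsOpen ((fun w : X => (r * tν n) • w) '' O) := by
    rw [← heq]; exact e.isOpenMap _ hOo
  have hGo : IsOpen (UniformSpace.ball x δ ∩ (fun w : X => (r * tν n) • w) '' O) :=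
    (UniformSpace.isOpen_ball x hδo).inter himo
  have hGne : (UniformSpace.ball x δ ∩ (fun w : X => (r * tν n) • w) '' O).Nonempty :=
    ⟨r • y, hry, ⟨xν n, hn2, hkey⟩⟩
  obtain ⟨_, ⟨s, rfl⟩, hsb, w, hwO, hweq⟩ := (hmin x).exists_mem_open hGo hGne
  refine ⟨w, hwO, ?_⟩
  simp only [mem_iUnion, mem_setOf_eq, exists_prop]
  exact ⟨s, hδε hsb, r * tν n,
    hδε (show (x, (r * tν n) • x) ∈ δ by rw [mul_smul]; exact hn1), hweq⟩

end VeechAux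

/-- Let `(T,X)` be a minimal invertible semiflow and `x ∈ X`. Then (1) `V[x]` is a dense
subset of `D[x]`; and (2) if `X` is metrizable, then `V[x] = D[x]`. -/
theorem veech_cell_dense_in_Dcell
    {T : Type u} {X : Type v} [Monoid T] [TopologicalSpace T] [ContinuousMul T]
    [UniformSpace X] [CompactSpace X] [T2Space X] [Nonempty X]
    [MulAction T X] [ContinuousSMul T X]
    (hmin : MinimalSF fun (t : T) (z : X) => t • z)
    (hinv : ∀ t : T, Function.Bijective fun z : X => t • z)
    (x : X) :
    ({x' : X | VrelVia.{u,v,w} (fun (t : T) (z : X) => t • z) x x'} ⊆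
        Dcell (fun (t : T) (z : X) => t • z) x ∧
      Dcell (fun (t : T) (z : X) => t • z) x ⊆
        closure {x' : X | VrelVia.{u,v,w} (fun (t : T) (z : X) => t • z) x x'}) ∧
    (TopologicalSpace.MetrizableSpace X →
      {x' : X | VrelVia.{u,v,w} (fun (t : T) (z : X) => t • z) x x'} =
        Dcell (fun (t : T) (z : X) => t • z) x) := by
  classical
  have hsub := vrel_subset_Dcell.{u,v,w} hmin hinv x
  have hdense : Dcell (fun (t : T) (z : X) => t • z) x ⊆
      closure {x' : X | VrelVia.{u,v,w} (fun (t : T) (z : X) => t • z) x x'} := by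
    intro z hz
    rw [mem_closure_iff]
    intro O hOo hzO
    obtain ⟨C, hC, hCc, hCsub⟩ := exists_mem_nhds_isClosed_subset (hOo.mem_nhds hzO)
    obtain ⟨x'', hx''V, hx''c⟩ := vrel_main.{u,v,w} hmin hinv x z hz (fun _ => interior C)
      (fun _ => isOpen_interior) (fun _ => mem_interior_iff_mem_nhds.2 hC)
      (fun _ _ _ => subset_rfl)
    exact ⟨x'', hCsub ((closure_minimal interior_subset hCc) (hx''c 0)), hx''V⟩
  refine ⟨⟨hsub, hdense⟩, ?_⟩
  intro hmetr
  refine Set.Subset.antisymm hsub ?_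
  intro z hz
  haveI := hmetr
  obtain ⟨B, hB⟩ := (𝓝 z).exists_antitone_basis
  obtain ⟨x'', hx''V, hx''c⟩ := vrel_main.{u,v,w} hmin hinv x z hz
    (fun k => interior (B k)) (fun _ => isOpen_interior)
    (fun k => mem_interior_iff_mem_nhds.2 (hB.toHasBasis.mem_of_mem trivial))
    (fun k l hkl => interior_mono (hB.antitone hkl))
  have hx''z : x'' = z := by
    by_contra hne
    have hzc : z ∈ ({x''}ᶜ : Set X) := by
      simp only [mem_compl_iff, mem_singleton_iff]
      exact fun h => hne h.symm
    obtain ⟨C, hC, hCc, hCsub⟩ := exists_mem_nhds_isClosed_subset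
      ((isOpen_compl_singleton (x := x'')).mem_nhds hzc)
    obtain ⟨k, -, hk⟩ := hB.toHasBasis.mem_iff.1 hC
    have hmem : x'' ∈ C := (closure_minimal (interior_subset.trans hk) hCc) (hx''c k)
    exact (hCsub hmem) rfl
  exact hx''z ▸ hx''V
end
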